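/- arXiv:1902.00699 — 3 statements merged into one kernel-verified Lean document; each statement's English description precedes it below -/
import Mathlib

section
/- Let E be a field, A an associative unital E-algebra, and W, V left A-modules, with V carrying an increasing filtration by A-submodules 0 = Fil_0 V ⊆ Fil_1 V ⊆ ⋯ ⊆ Fil_m V = V and graded pieces gr_k V = Fil_k V / Fil_{k-1} V. Suppose there exists 1 ≤ k_0 ≤ m such that: Ext^1_A(W, gr_k V) = 0 for every 1 ≤ k ≤ m with k ≠ k_0; dim_E Ext^1_A(W, gr_{k_0} V) = 1; Ext^2_A(W, gr_k V) = 0 for every 1 ≤ k ≤ k_0 − 1; and Hom_A(W, gr_k V) = 0 for every k_0 + 1 ≤ k ≤ m. Then dim_E Ext^1_A(W, V) = 1. -/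
open CategoryTheory CategoryTheory.Limits

noncomputable section DevissageAux

namespace DevissageAux

variable (E : Type) [Field E] {A : Type} [Ring A] [Algebra E A]
variable {W : ModuleCat A} (P : ProjectiveResolution W)

/-- Post-composition map between hom complexes. -/
def mapY {M N : ModuleCat A} (φ : M ⟶ N) :
    P.complex.linearYonedaObj E M ⟶ P.complex.linearYonedaObj E N where
  f i := ModuleCat.ofHom (Linear.rightComp E (P.complex.X i) φ)
  comm' i j _ := by
    ext g
    exact (Category.assoc (P.complex.d j i) (g : P.complex.X i ⟶ M) φ).symm

lemma mapY_id (M : ModuleCat A) : mapY E P (𝟙 M) = 𝟙 _ := by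
  ext i g
  exact Category.comp_id (g : P.complex.X i ⟶ M)

lemma mapY_comp {M N K : ModuleCat A} (φ : M ⟶ N) (ψ : N ⟶ K) :
    mapY E P (φ ≫ ψ) = mapY E P φ ≫ mapY E P ψ := by
  ext i g
  exact (Category.assoc (g : P.complex.X i ⟶ M) φ ψ).symm

/-- The short complex of hom complexes obtained from a short complex of modules. -/
abbrev mapSC (S : ShortComplex (ModuleCat A)) :
    ShortComplex (CochainComplex (ModuleCat E) ℕ) :=
  ShortComplex.mk (mapY E P S.f) (mapY E P S.g)
    (by
      rw [← mapY_comp, S.zero]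
      ext i g
      rw [HomologicalComplex.zero_f, ModuleCat.hom_zero, LinearMap.zero_apply]
      exact Limits.comp_zero (f := (g : P.complex.X i ⟶ S.X₁)))

/-- The homology of the hom complex, computing Ext groups. -/
abbrev H (n : ℕ) (M : ModuleCat A) : ModuleCat E :=
  (P.complex.linearYonedaObj E M).homology n

lemma mapSC_shortExact {S : ShortComplex (ModuleCat A)} (hS : S.ShortExact) :
    (mapSC E P S).ShortExact := by
  apply HomologicalComplex.shortExact_of_degreewise_shortExact
  intro i
  have hinj : Function.Injective S.f := hS.moduleCat_injective_f
  have hker : LinearMap.range S.f.hom = LinearMap.ker S.g.hom :=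
    hS.exact.moduleCat_range_eq_ker
  have hepi : Epi S.g := hS.epi_g
  haveI hmono' : Mono ((mapSC E P S).map
      (HomologicalComplex.eval (ModuleCat E) (ComplexShape.up ℕ) i)).f := by
    rw [ModuleCat.mono_iff_injective]
    intro u v huv
    refine ModuleCat.hom_ext (LinearMap.ext fun x => hinj ?_)
    exact congrArg (fun f : P.complex.X i ⟶ S.X₂ => f.hom x) huv
  haveI hepi' : Epi ((mapSC E P S).map
      (HomologicalComplex.eval (ModuleCat E) (ComplexShape.up ℕ) i)).g := by
    rw [ModuleCat.epi_iff_surjective]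
    intro (w : P.complex.X i ⟶ S.X₃)
    exact ⟨Projective.factorThru w S.g, Projective.factorThru_comp w S.g⟩
  refine ⟨?_⟩
  · rw [ShortComplex.moduleCat_exact_iff]
    intro (u : P.complex.X i ⟶ S.X₂) hu
    have hu' : ∀ x, S.g (u x) = 0 := fun x => congrArg (fun f : P.complex.X i ⟶ S.X₃ => f.hom x) hu
    have hmem : ∀ x, u x ∈ LinearMap.range S.f.hom := fun x => by
      rw [hker]; exact hu' x
    refine ⟨ModuleCat.ofHom ((LinearEquiv.ofInjective S.f.hom hinj).symm.toLinearMap ∘ₗ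
      LinearMap.codRestrict (LinearMap.range S.f.hom) u.hom hmem), ?_⟩
    apply ModuleCat.hom_ext
    apply LinearMap.ext
    intro x
    have h2 := congrArg Subtype.val
      ((LinearEquiv.ofInjective S.f.hom hinj).apply_symm_apply ⟨u x, hmem x⟩)
    show S.f (((LinearEquiv.ofInjective S.f.hom hinj).symm) ⟨u x, hmem x⟩) = u x
    simpa only [LinearEquiv.ofInjective_apply] using h2

lemma subsingleton_H_middle {S : ShortComplex (ModuleCat A)} (hS : S.ShortExact)
    (n : ℕ) (h1 : Subsingleton (H E P n S.X₁)) (h3 : Subsingleton (H E P n S.X₃)) :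
    Subsingleton (H E P n S.X₂) := by
  have hex := (mapSC_shortExact E P hS).homology_exact₂ n
  rw [ShortComplex.moduleCat_exact_iff] at hex
  have hz : ∀ x : H E P n S.X₂, x = 0 := by
    intro x
    obtain ⟨y, hy⟩ := hex x (Subsingleton.elim _ _)
    rw [← hy, Subsingleton.elim y 0, map_zero]
  exact ⟨fun a b => by rw [hz a, hz b]⟩

lemma rank_eq_of_step {S : ShortComplex (ModuleCat A)} (hS : S.ShortExact)
    (h3a : Subsingleton (H E P 0 S.X₃)) (h3b : Subsingleton (H E P 1 S.X₃)) :
    Module.rank E (H E P 1 S.X₂) = Module.rank E (H E P 1 S.X₁) := by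
  have hSE := mapSC_shortExact E P hS
  have hex1 := hSE.homology_exact₁ 0 1 rfl
  have hex2 := hSE.homology_exact₂ 1
  rw [ShortComplex.moduleCat_exact_iff] at hex1 hex2
  have hinj : Function.Injective
      (HomologicalComplex.homologyMap (mapSC E P S).f 1) := by
    rw [injective_iff_map_eq_zero]
    intro x hx
    obtain ⟨y, hy⟩ := hex1 x hx
    rw [← hy, Subsingleton.elim y 0, map_zero]
  have hsurj : Function.Surjective
      (HomologicalComplex.homologyMap (mapSC E P S).f 1) := fun x =>
    hex2 x (Subsingleton.elim _ _)
  exact (LinearEquiv.ofBijective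
    (HomologicalComplex.homologyMap (mapSC E P S).f 1).hom ⟨hinj, hsurj⟩).rank_eq.symm

lemma rank_eq_of_last {S : ShortComplex (ModuleCat A)} (hS : S.ShortExact)
    (h1a : Subsingleton (H E P 1 S.X₁)) (h1b : Subsingleton (H E P 2 S.X₁)) :
    Module.rank E (H E P 1 S.X₂) = Module.rank E (H E P 1 S.X₃) := by
  have hSE := mapSC_shortExact E P hS
  have hex2 := hSE.homology_exact₂ 1
  have hex3 := hSE.homology_exact₃ 1 2 rfl
  rw [ShortComplex.moduleCat_exact_iff] at hex2 hex3
  have hinj : Function.Injective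
      (HomologicalComplex.homologyMap (mapSC E P S).g 1) := by
    rw [injective_iff_map_eq_zero]
    intro x hx
    obtain ⟨y, hy⟩ := hex2 x hx
    rw [← hy, Subsingleton.elim y 0, map_zero]
  have hsurj : Function.Surjective
      (HomologicalComplex.homologyMap (mapSC E P S).g 1) := fun x =>
    hex3 x (Subsingleton.elim _ _)
  exact (LinearEquiv.ofBijective
    (HomologicalComplex.homologyMap (mapSC E P S).g 1).hom ⟨hinj, hsurj⟩).rank_eq

lemma subsingleton_carrier_of_isZero {X : ModuleCat E} (h : IsZero X) :
    Subsingleton X := by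
  have h0 : (𝟙 X : X ⟶ X) = 0 := h.eq_of_src _ _
  have key : ∀ c : ↑X, c = 0 := fun c => by
    have hc : (𝟙 X : X ⟶ X) c = (0 : X ⟶ X) c := by rw [h0]
    simpa using hc
  exact ⟨fun a b => by rw [key a, key b]⟩

lemma subsingleton_H_of_subsingleton (M : ModuleCat A) (hM : Subsingleton M)
    (n : ℕ) : Subsingleton (H E P n M) := by
  have hsub : ∀ (Q : ModuleCat A) (u v : Q ⟶ M), u = v := fun Q u v =>
    ModuleCat.hom_ext (LinearMap.ext fun x => Subsingleton.elim _ _)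
  have : (P.complex.linearYonedaObj E M).ExactAt n := by
    rw [HomologicalComplex.exactAt_iff, ShortComplex.moduleCat_exact_iff]
    intro x _
    refine ⟨0, ?_⟩
    rw [map_zero]
    exact (hsub _ x 0).symm
  apply subsingleton_carrier_of_isZero
  exact (HomologicalComplex.exactAt_iff_isZero_homology _ _).mp this

lemma subsingleton_H0 (M : ModuleCat A) (h : Subsingleton (W ⟶ M)) :
    Subsingleton (H E P 0 M) := by
  have : (P.complex.linearYonedaObj E M).ExactAt 0 := by
    rw [HomologicalComplex.exactAt_iff' _ 0 0 1 (CochainComplex.prev_nat_zero)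
      ((ComplexShape.up ℕ).next_eq' rfl), ShortComplex.moduleCat_exact_iff]
    intro (x : P.complex.X 0 ⟶ M) hx
    have hd : P.complex.d 1 0 ≫ x = 0 := by
      have := hx
      exact this
    obtain ⟨φ, hφ⟩ := CokernelCofork.IsColimit.desc' P.isColimitCokernelCofork x hd
    have hφ0 : φ = 0 := @Subsingleton.elim _ h _ _
    have hx0 : x = 0 := by
      rw [← hφ, hφ0, Limits.comp_zero]
    refine ⟨0, ?_⟩
    rw [map_zero, hx0]
    rfl
  apply subsingleton_carrier_of_isZero
  exact (HomologicalComplex.exactAt_iff_isZero_homology _ _).mp this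

lemma subsingleton_H_of_ext (n : ℕ) (M : ModuleCat A)
    (h : Subsingleton (((Ext E (ModuleCat A) n).obj (Opposite.op W)).obj M)) :
    Subsingleton (H E P n M) := by
  have := h
  exact Equiv.subsingleton (P.isoExt n M).toLinearEquiv.symm.toEquiv

lemma rank_H_eq_rank_ext (n : ℕ) (M : ModuleCat A) :
    Module.rank E (H E P n M) =
      Module.rank E (((Ext E (ModuleCat A) n).obj (Opposite.op W)).obj M) :=
  ((P.isoExt n M).toLinearEquiv.symm).rank_eq

/-- Isomorphic modules have isomorphic hom complexes. -/
def mapYIso {M N : ModuleCat A} (e : M ≅ N) :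
    P.complex.linearYonedaObj E M ≅ P.complex.linearYonedaObj E N where
  hom := mapY E P e.hom
  inv := mapY E P e.inv
  hom_inv_id := by rw [← mapY_comp, e.hom_inv_id, mapY_id]
  inv_hom_id := by rw [← mapY_comp, e.inv_hom_id, mapY_id]

/-- Isomorphic modules have linearly equivalent `H`. -/
def equivH {M N : ModuleCat A} (e : M ≅ N) (n : ℕ) :
    (H E P n M : Type) ≃ₗ[E] (H E P n N : Type) :=
  ((HomologicalComplex.homologyFunctor (ModuleCat E) (ComplexShape.up ℕ) n).mapIso
    (mapYIso E P e)).toLinearEquiv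

end DevissageAux

end DevissageAux

open DevissageAux in
/-- **Formal dévissage, part (ii), second claim.**
Let `E` be a field, `A` an associative unital `E`-algebra, and `W`, `V` left `A`-modules,
with `V` carrying an increasing filtration by `A`-submodules
`0 = Fil 0 ⊆ Fil 1 ⊆ ⋯ ⊆ Fil m = V` and graded pieces `gr k = Fil k / Fil (k-1)`.
Suppose there exists `1 ≤ k₀ ≤ m` such that: `Ext¹_A(W, gr k) = 0` for every `1 ≤ k ≤ m`
with `k ≠ k₀`; `dim_E Ext¹_A(W, gr k₀) = 1`; `Ext²_A(W, gr k) = 0` for every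
`1 ≤ k ≤ k₀ - 1`; and `Hom_A(W, gr k) = 0` for every `k₀ + 1 ≤ k ≤ m`.
Then `dim_E Ext¹_A(W, V) = 1`. -/
theorem rank_ext_one_eq_one_of_graded_pieces
    (E : Type) [Field E] (A : Type) [Ring A] [Algebra E A]
    (W V : Type) [AddCommGroup W] [Module A W] [AddCommGroup V] [Module A V]
    (m : ℕ) (Fil : ℕ → Submodule A V)
    (hFil_mono : Monotone Fil) (hFil_zero : Fil 0 = ⊥) (hFil_top : Fil m = ⊤)
    (k₀ : ℕ) (hk₀_one : 1 ≤ k₀) (hk₀_m : k₀ ≤ m)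
    (hExt1 : ∀ k : ℕ, 1 ≤ k → k ≤ m → k ≠ k₀ →
      Subsingleton (((Ext E (ModuleCat A) 1).obj
          (Opposite.op (ModuleCat.of A W))).obj
        (ModuleCat.of A
          (↥(Fil k) ⧸ (Submodule.comap (Fil k).subtype (Fil (k - 1)))))))
    (hExt1k₀ : Module.rank E
      (((Ext E (ModuleCat A) 1).obj
          (Opposite.op (ModuleCat.of A W))).obj
        (ModuleCat.of A
          (↥(Fil k₀) ⧸ (Submodule.comap (Fil k₀).subtype (Fil (k₀ - 1)))))) = 1)
    (hExt2 : ∀ k : ℕ, 1 ≤ k → k ≤ k₀ - 1 →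
      Subsingleton (((Ext E (ModuleCat A) 2).obj
          (Opposite.op (ModuleCat.of A W))).obj
        (ModuleCat.of A
          (↥(Fil k) ⧸ (Submodule.comap (Fil k).subtype (Fil (k - 1)))))))
    (hHom : ∀ k : ℕ, k₀ + 1 ≤ k → k ≤ m →
      Subsingleton
        (W →ₗ[A] (↥(Fil k) ⧸ (Submodule.comap (Fil k).subtype (Fil (k - 1)))))) :
    Module.rank E (((Ext E (ModuleCat A) 1).obj
        (Opposite.op (ModuleCat.of A W))).obj (ModuleCat.of A V)) = 1 := by
  classical
  obtain ⟨P⟩ := (inferInstance :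
    HasProjectiveResolution (ModuleCat.of A W)).out
  set Fk : ℕ → ModuleCat A := fun k => ModuleCat.of A ↥(Fil k) with hFk
  set Gr : ℕ → ModuleCat A := fun k => ModuleCat.of A
    (↥(Fil k) ⧸ (Submodule.comap (Fil k).subtype (Fil (k - 1)))) with hGr
  -- the short exact sequences 0 → Fil n → Fil (n+1) → gr (n+1) → 0
  have hle : ∀ n : ℕ, Fil n ≤ Fil (n + 1) := fun n => hFil_mono (Nat.le_succ n)
  let Sk : ℕ → ShortComplex (ModuleCat A) := fun n => ShortComplex.mk
    (ModuleCat.ofHom (Submodule.inclusion (hle n)) : Fk n ⟶ Fk (n + 1))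
    (ModuleCat.ofHom
      (Submodule.mkQ (Submodule.comap (Fil (n + 1)).subtype (Fil n)))
      : Fk (n + 1) ⟶ Gr (n + 1))
    (by
      ext x
      simp only [ModuleCat.hom_comp, ModuleCat.hom_ofHom, LinearMap.comp_apply]
      refine (Submodule.Quotient.mk_eq_zero _).mpr ?_
      exact x.2)
  have SkSE : ∀ n : ℕ, (Sk n).ShortExact := by
    intro n
    haveI : Mono (Sk n).f := by
      rw [ModuleCat.mono_iff_injective]
      exact Submodule.inclusion_injective (hle n)
    haveI : Epi (Sk n).g := by
      rw [ModuleCat.epi_iff_surjective]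
      exact Submodule.mkQ_surjective _
    refine ⟨?_⟩
    rw [ShortComplex.moduleCat_exact_iff]
    intro (x : ↥(Fil (n + 1))) hx
    have hmem : (x : V) ∈ Fil n := by
      simpa using (Submodule.Quotient.mk_eq_zero _).mp hx
    exact ⟨⟨(x : V), hmem⟩, Subtype.ext rfl⟩
  obtain ⟨n₀, rfl⟩ : ∃ n, k₀ = n + 1 :=
    ⟨k₀ - 1, (Nat.succ_pred_eq_of_pos hk₀_one).symm⟩
  -- claim 1
  have claim1 : ∀ k, k ≤ n₀ →
      Subsingleton (H E P 1 (Fk k)) ∧ Subsingleton (H E P 2 (Fk k)) := by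
    intro k
    induction k with
    | zero =>
      intro _
      have hsub : Subsingleton ↥(Fil 0) := by
        refine ⟨fun a b => Subtype.ext ?_⟩
        have ha : (a : V) ∈ (⊥ : Submodule A V) := hFil_zero ▸ a.2
        have hb : (b : V) ∈ (⊥ : Submodule A V) := hFil_zero ▸ b.2
        rw [Submodule.mem_bot] at ha hb
        rw [ha, hb]
      exact ⟨subsingleton_H_of_subsingleton E P _ hsub 1,
        subsingleton_H_of_subsingleton E P _ hsub 2⟩
    | succ n ih =>
      intro h
      obtain ⟨ih1, ih2⟩ := ih (le_trans (Nat.le_succ n) h)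
      have hgr1 : Subsingleton (H E P 1 (Gr (n + 1))) :=
        subsingleton_H_of_ext E P 1 _
          (hExt1 (n + 1) (Nat.succ_le_succ (Nat.zero_le n)) (by omega) (by omega))
      have hgr2 : Subsingleton (H E P 2 (Gr (n + 1))) :=
        subsingleton_H_of_ext E P 2 _ (hExt2 (n + 1)
          (Nat.succ_le_succ (Nat.zero_le n)) (by omega))
      exact ⟨subsingleton_H_middle E P (SkSE n) 1 ih1 hgr1,
        subsingleton_H_middle E P (SkSE n) 2 ih2 hgr2⟩
  -- claim 2 : rank at k₀
  have hrank_k₀ : Module.rank E (H E P 1 (Fk (n₀ + 1))) = 1 := by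
    have h1 := rank_eq_of_last E P (SkSE n₀) (claim1 n₀ le_rfl).1 (claim1 n₀ le_rfl).2
    rw [h1]
    rw [rank_H_eq_rank_ext E P 1 (Gr (n₀ + 1))]
    exact hExt1k₀
  -- claim 3 : rank stays 1 up to m
  have claim3 : ∀ j, n₀ + 1 + j ≤ m →
      Module.rank E (H E P 1 (Fk (n₀ + 1 + j))) = 1 := by
    intro j
    induction j with
    | zero => intro _; exact hrank_k₀
    | succ i ih =>
      intro h
      have h0 : Subsingleton (H E P 0 (Gr (n₀ + 1 + i + 1))) := by
        apply subsingleton_H0 E P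
        haveI := hHom (n₀ + 1 + i + 1) (by omega) (by omega)
        exact ModuleCat.homEquiv.subsingleton
      have h1 : Subsingleton (H E P 1 (Gr (n₀ + 1 + i + 1))) :=
        subsingleton_H_of_ext E P 1 _
          (hExt1 (n₀ + 1 + i + 1) (by omega) (by omega) (by omega))
      exact (rank_eq_of_step E P (SkSE (n₀ + 1 + i)) h0 h1).trans (ih (by omega))
  have h3 := claim3 (m - (n₀ + 1)) (by omega)
  have hm : n₀ + 1 + (m - (n₀ + 1)) = m := by omega
  rw [hm] at h3
  -- final transfer
  have eV : (↥(Fil m)) ≃ₗ[A] V := LinearEquiv.ofTop (Fil m) hFil_top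
  have e2 := (equivH E P (eV.toModuleIso : Fk m ≅ ModuleCat.of A V) 1).rank_eq
  rw [← rank_H_eq_rank_ext E P 1 (ModuleCat.of A V), ← e2]
  exact h3
end

section
/- Let p be a prime and E a finite field extension of ℚ_p, with the topology induced by the unique absolute value on E extending |·|_p. Let val_p : ℚ_p^× → ℤ be the p-adic valuation (val_p(p) = 1) and let log_0 : ℚ_p^× → ℚ_p be the Iwasawa logarithm, both viewed as E-valued maps via ℤ ⊆ ℚ_p ⊆ E. Then every continuous group homomorphism f : ℚ_p^× → (E, +) can be written uniquely as f = a·log_0 + b·val_p with a, b ∈ E. In particular, the E-vector space of continuous group homomorphisms from ℚ_p^× to (E, +) is 2-dimensional, with basis {log_0, val_p}. -/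
open IsUltrametricDist Finset Filter

section PadicAux

variable {p : ℕ} [hp : Fact p.Prime]

lemma padicAux_p_pos : (0:ℝ) < (p:ℝ) := by exact_mod_cast hp.out.pos

lemma padicAux_p_ne : (p:ℝ) ≠ 0 := ne_of_gt padicAux_p_pos

lemma padicAux_one_le_p : (1:ℝ) ≤ (p:ℝ) := by exact_mod_cast hp.out.one_lt.le

lemma padicAux_anti {a b : ℤ} (h : a ≤ b) : (p:ℝ)^(-b) ≤ (p:ℝ)^(-a) :=
  zpow_le_zpow_right₀ padicAux_one_le_p (neg_le_neg h)

lemma padicAux_zpow_le_one {a : ℤ} (h : 0 ≤ a) : (p:ℝ)^(-a) ≤ 1 := by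
  simpa using padicAux_anti (p := p) h

lemma padicAux_norm_ppow (n : ℕ) : ‖((p:ℚ_[p]))^n‖ = (p:ℝ)^(-(n:ℤ)) :=
  Padic.norm_p_pow n

lemma padicAux_norm_natCast_le_one (n : ℕ) : ‖(n:ℚ_[p])‖ ≤ 1 := by
  have := Padic.norm_int_le_one (p := p) (n : ℤ)
  push_cast at this; exact this

lemma padicAux_norm_natCast_inv_le (n : ℕ) (hn : n ≠ 0) : ‖((n:ℚ_[p]))⁻¹‖ ≤ n := by
  have hd : (p:ℕ)^(padicValNat p n) ∣ n := pow_padicValNat_dvd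
  have hle : ((p:ℕ)^(padicValNat p n) : ℝ) ≤ n := by
    exact_mod_cast Nat.cast_le.mpr (Nat.le_of_dvd (Nat.pos_of_ne_zero hn) hd)
  have hnz : (n:ℚ_[p]) ≠ 0 := Nat.cast_ne_zero.mpr hn
  have hnorm : ‖(n:ℚ_[p])‖ = (p:ℝ)^(-(padicValNat p n : ℤ)) := by
    rw [Padic.norm_eq_zpow_neg_valuation hnz, Padic.valuation_natCast]
  rw [norm_inv, hnorm, ← zpow_neg, neg_neg, zpow_natCast]
  exact le_trans (by push_cast; exact le_refl _) hle

lemma padicAux_pow_sub_linear (y : ℚ_[p]) (hy : ‖y‖ ≤ 1) (s : ℕ) :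
    ‖(1+y)^s - 1 - s*y‖ ≤ ‖y‖^2 := by
  match s with
  | 0 => simp
  | 1 => simp
  | (m+2) =>
    have hexp : (1+y)^(m+2) = ∑ k ∈ range (m+3), y^k * (1:ℚ_[p])^(m+2-k) * ((m+2).choose k) := by
      rw [add_comm 1 y]; exact add_pow y 1 (m+2)
    set t : ℕ → ℚ_[p] := fun k => y^k * (1:ℚ_[p])^(m+2-k) * ((m+2).choose k) with ht
    have hsplit : ∑ k ∈ range (m+3), t k = (∑ k ∈ range (m+1), t (k+2) + t 1) + t 0 := by
      rw [Finset.sum_range_succ' t (m+2), Finset.sum_range_succ' (fun i => t (i+1)) (m+1)]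
    have ht0 : t 0 = 1 := by simp [ht]
    have ht1 : t 1 = (m+2 : ℕ) * y := by simp [ht]; ring
    have : (1+y)^(m+2) - 1 - ((m+2:ℕ):ℚ_[p])*y = ∑ k ∈ range (m+1), t (k+2) := by
      rw [hexp, hsplit, ht0, ht1]; push_cast; ring
    rw [this]
    refine norm_sum_le_of_forall_le_of_nonneg (by positivity) ?_
    intro i _
    have : ‖t (i+2)‖ ≤ ‖y‖^(i+2) := by
      rw [ht]; simp only [one_pow, mul_one]
      calc ‖y ^ (i+2) * (((m+2).choose (i+2) : ℕ) : ℚ_[p])‖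
          = ‖y‖^(i+2) * ‖(((m+2).choose (i+2) : ℕ) : ℚ_[p])‖ := by rw [norm_mul, norm_pow]
        _ ≤ ‖y‖^(i+2) * 1 := by
            exact mul_le_mul_of_nonneg_left (padicAux_norm_natCast_le_one _) (by positivity)
        _ = ‖y‖^(i+2) := mul_one _
    refine this.trans ?_
    exact pow_le_pow_of_le_one (norm_nonneg y) hy (by omega)

lemma padicAux_fermat (w : ℚ_[p]) (hw : ‖w‖ = 1) :
    ‖w^(p-1) - 1‖ ≤ (p:ℝ)^(-1:ℤ) := by
  set W : ℤ_[p] := ⟨w, hw.le⟩ with hW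
  have hWnorm : ‖W‖ = 1 := by rw [PadicInt.norm_def]; exact hw
  have hWz : PadicInt.toZMod W ≠ 0 := by
    intro h
    have h2 : W ∈ RingHom.ker (PadicInt.toZMod (p := p)) := h
    rw [PadicInt.ker_toZMod, PadicInt.maximalIdeal_eq_span_p,
      Ideal.mem_span_singleton, ← PadicInt.norm_lt_one_iff_dvd, hWnorm] at h2
    exact lt_irrefl 1 h2
  have key : W^(p-1) - 1 ∈ (Ideal.span {(p:ℤ_[p])^1} : Ideal ℤ_[p]) := by
    rw [pow_one, ← PadicInt.maximalIdeal_eq_span_p, ← PadicInt.ker_toZMod]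
    have h1 : (PadicInt.toZMod W)^(p-1) = 1 := ZMod.pow_card_sub_one_eq_one hWz
    simp only [RingHom.mem_ker, map_sub, map_pow, map_one, h1, sub_self]
  have hb := (PadicInt.norm_le_pow_iff_mem_span_pow (W^(p-1) - 1) 1).mpr key
  have heq : ‖w^(p-1) - 1‖ = ‖W^(p-1) - (1:ℤ_[p])‖ := by
    rw [PadicInt.norm_def]; rfl
  rw [heq]
  exact_mod_cast hb

lemma padicAux_exists_nat_approx (c : ℚ_[p]) (hc : ‖c‖ ≤ 1) :
    ∃ s : ℕ, ‖c - s‖ ≤ (p:ℝ)^(-1:ℤ) := by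
  set C : ℤ_[p] := ⟨c, hc⟩ with hC
  refine ⟨C.appr 1, ?_⟩
  have hb := (PadicInt.norm_le_pow_iff_mem_span_pow (C - ((C.appr 1 : ℕ) : ℤ_[p])) 1).mpr
    (PadicInt.appr_spec 1 C)
  have heq : ‖c - (C.appr 1 : ℕ)‖ = ‖C - ((C.appr 1 : ℕ) : ℤ_[p])‖ := by
    rw [PadicInt.norm_def]; rfl
  rw [heq]
  exact_mod_cast hb

lemma padicAux_norm_z₀ : ‖(1 + (p:ℚ_[p])^2)‖ = 1 := by
  rw [Padic.add_eq_max_of_ne]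
  · rw [norm_one, padicAux_norm_ppow]
    refine max_eq_left (padicAux_zpow_le_one (by norm_num))
  · rw [norm_one, padicAux_norm_ppow]
    intro h
    have h3 : (p:ℝ)^(-(2:ℤ)) ≤ (p:ℝ)^(-(1:ℤ)) := padicAux_anti (by norm_num)
    have h4 : (p:ℝ)^(-(1:ℤ)) < 1 := by
      rw [zpow_neg_one]
      exact inv_lt_one_of_one_lt₀ (by exact_mod_cast hp.out.one_lt)
    push_cast at h
    rw [← h] at h3
    exact absurd (h3.trans_lt h4) (lt_irrefl 1)

lemma padicAux_z₀_ne : (1 + (p:ℚ_[p])^2) ≠ 0 := by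
  intro h
  have := padicAux_norm_z₀ (p := p)
  rw [h, norm_zero] at this; norm_num at this

lemma padicAux_norm_z₀_zpow (t : ℤ) : ‖(1 + (p:ℚ_[p])^2)^t‖ = 1 := by
  rw [norm_zpow, padicAux_norm_z₀, one_zpow]

lemma padicAux_z₀_pow_pow (k : ℕ) :
    ‖(1 + (p:ℚ_[p])^2)^(p^k) - 1 - (p:ℚ_[p])^(k+2)‖ ≤ (p:ℝ)^(-(k+3:ℤ)) := by
  induction k with
  | zero => simp
  | succ k ih =>
    set z₀ : ℚ_[p] := 1 + (p:ℚ_[p])^2 with hz₀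
    set x : ℚ_[p] := z₀^(p^k) - 1 with hx
    have hxnorm : ‖x‖ ≤ (p:ℝ)^(-(k+2:ℤ)) := by
      have : x = (x - (p:ℚ_[p])^(k+2)) + (p:ℚ_[p])^(k+2) := by ring
      rw [this]
      refine (norm_add_le_max _ _).trans (max_le ?_ ?_)
      · exact ih.trans (padicAux_anti (by omega))
      · rw [padicAux_norm_ppow]; exact_mod_cast le_refl _
    have hx2 : ‖x‖ ≤ 1 := hxnorm.trans (padicAux_zpow_le_one (by omega))
    have hS := padicAux_pow_sub_linear x hx2 p
    have hpow : z₀^(p^(k+1)) = (1+x)^p := by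
      rw [hx]; ring_nf
    have hxy : ‖(p:ℚ_[p])*x - (p:ℚ_[p])^(k+3)‖ ≤ (p:ℝ)^(-(k+4:ℤ)) := by
      have : (p:ℚ_[p])*x - (p:ℚ_[p])^(k+3) = (p:ℚ_[p]) * (x - (p:ℚ_[p])^(k+2)) := by ring
      rw [this, norm_mul, Padic.norm_p]
      calc (p:ℝ)⁻¹ * ‖x - (p:ℚ_[p])^(k+2)‖ ≤ (p:ℝ)⁻¹ * (p:ℝ)^(-(k+3:ℤ)) := by
            exact mul_le_mul_of_nonneg_left ih (by positivity)
        _ = (p:ℝ)^(-(k+4:ℤ)) := by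
            rw [← zpow_neg_one, ← zpow_add₀ padicAux_p_ne]; congr 1 <;> try ring
    have hsq : ‖x‖^2 ≤ (p:ℝ)^(-(k+4:ℤ)) := by
      calc ‖x‖^2 ≤ ((p:ℝ)^(-(k+2:ℤ)))^2 := by
            exact pow_le_pow_left₀ (norm_nonneg x) hxnorm 2
        _ = (p:ℝ)^(-(2*k+4:ℤ)) := by rw [← zpow_natCast _ 2, ← zpow_mul]; ring_nf
        _ ≤ (p:ℝ)^(-(k+4:ℤ)) := padicAux_anti (by omega)
    have hkey : z₀^(p^(k+1)) - 1 - (p:ℚ_[p])^(k+3)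
        = ((1+x)^p - 1 - (p:ℚ_[p])*x) + ((p:ℚ_[p])*x - (p:ℚ_[p])^(k+3)) := by
      rw [hpow]; push_cast; ring
    have hfin : ‖z₀^(p^(k+1)) - 1 - (p:ℚ_[p])^(k+3)‖ ≤ (p:ℝ)^(-(k+4:ℤ)) := by
      rw [hkey]
      exact (norm_add_le_max _ _).trans (max_le (hS.trans hsq) hxy)
    have hcast : (-(((k+1):ℕ) + 3) : ℤ) = -(k+4:ℤ) := by push_cast; ring
    rw [show ((k:ℕ)+1+2) = (k+3) from rfl, hcast]
    exact hfin

lemma padicAux_density (n : ℕ) (z : ℚ_[p]) (hz : ‖z - 1‖ ≤ (p:ℝ)^(-2:ℤ)) :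
    ∃ t : ℤ, ‖z - (1 + (p:ℚ_[p])^2)^t‖ ≤ (p:ℝ)^(-(n+2:ℤ)) := by
  induction n with
  | zero =>
    refine ⟨0, ?_⟩
    simpa using hz
  | succ n ih =>
    obtain ⟨t, ht⟩ := ih
    set z₀ : ℚ_[p] := 1 + (p:ℚ_[p])^2 with hz₀
    set N : ℕ := n + 2 with hN
    set v : ℚ_[p] := z * (z₀^t)⁻¹ with hv
    have hz₀t : ‖z₀^t‖ = 1 := padicAux_norm_z₀_zpow t
    have hz₀tne : z₀^t ≠ 0 := by
      intro h; rw [h, norm_zero] at hz₀t; norm_num at hz₀t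
    have hv1 : ‖v - 1‖ ≤ (p:ℝ)^(-(N:ℤ)) := by
      have : v - 1 = (z - z₀^t) * (z₀^t)⁻¹ := by
        rw [hv]; field_simp
      rw [this, norm_mul, norm_inv, hz₀t, inv_one, mul_one]
      exact_mod_cast ht
    set c : ℚ_[p] := (v - 1) / (p:ℚ_[p])^N with hc
    have hpN : ((p:ℚ_[p]))^N ≠ 0 := pow_ne_zero _ (by exact_mod_cast hp.out.ne_zero)
    have hcnorm : ‖c‖ ≤ 1 := by
      rw [hc, norm_div, padicAux_norm_ppow]
      rw [div_le_one (zpow_pos padicAux_p_pos _)]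
      simpa using hv1
    obtain ⟨s, hs⟩ := padicAux_exists_nat_approx c hcnorm
    set y : ℚ_[p] := z₀^(p^n) - 1 with hy
    have hY : ‖y - (p:ℚ_[p])^N‖ ≤ (p:ℝ)^(-(N+1:ℤ)) := by
      have := padicAux_z₀_pow_pow (p := p) n
      rw [hy, hN]; push_cast
      convert this using 3 <;> push_cast <;> ring
    have hynorm : ‖y‖ ≤ (p:ℝ)^(-(N:ℤ)) := by
      have : y = (y - (p:ℚ_[p])^N) + (p:ℚ_[p])^N := by ring
      rw [this]
      refine (norm_add_le_max _ _).trans (max_le ?_ ?_)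
      · exact hY.trans (padicAux_anti (by omega))
      · rw [padicAux_norm_ppow]
    have hy1 : ‖y‖ ≤ 1 := hynorm.trans (padicAux_zpow_le_one (by positivity))
    have hS := padicAux_pow_sub_linear y hy1 s
    have hsq : ‖y‖^2 ≤ (p:ℝ)^(-(N+1:ℤ)) := by
      calc ‖y‖^2 ≤ ((p:ℝ)^(-(N:ℤ)))^2 := pow_le_pow_left₀ (norm_nonneg y) hynorm 2
        _ = (p:ℝ)^(-(2*N:ℤ)) := by rw [← zpow_natCast _ 2, ← zpow_mul]; congr 1; ring
        _ ≤ (p:ℝ)^(-(N+1:ℤ)) := padicAux_anti (by omega)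
    have hsy : ‖(s:ℚ_[p])*y - (s:ℚ_[p])*(p:ℚ_[p])^N‖ ≤ (p:ℝ)^(-(N+1:ℤ)) := by
      have : (s:ℚ_[p])*y - (s:ℚ_[p])*(p:ℚ_[p])^N = (s:ℚ_[p]) * (y - (p:ℚ_[p])^N) := by ring
      rw [this, norm_mul]
      calc ‖(s:ℚ_[p])‖ * ‖y - (p:ℚ_[p])^N‖ ≤ 1 * (p:ℝ)^(-(N+1:ℤ)) :=
            mul_le_mul (padicAux_norm_natCast_le_one s) hY (norm_nonneg _) (by norm_num)
        _ = (p:ℝ)^(-(N+1:ℤ)) := one_mul _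
    have hbig : ‖(1+y)^s - 1 - (s:ℚ_[p])*(p:ℚ_[p])^N‖ ≤ (p:ℝ)^(-(N+1:ℤ)) := by
      have : (1+y)^s - 1 - (s:ℚ_[p])*(p:ℚ_[p])^N
          = ((1+y)^s - 1 - (s:ℚ_[p])*y) + ((s:ℚ_[p])*y - (s:ℚ_[p])*(p:ℚ_[p])^N) := by ring
      rw [this]
      exact (norm_add_le_max _ _).trans (max_le (hS.trans hsq) hsy)
    refine ⟨t + (s * p^n : ℕ), ?_⟩
    have hzpow : z₀^(t + ((s * p^n : ℕ):ℤ)) = z₀^t * (1+y)^s := by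
      rw [zpow_add₀ padicAux_z₀_ne, zpow_natCast]
      congr 1
      rw [mul_comm s (p^n), pow_mul]
      congr 1
      rw [hy]; ring
    have hsplit : z - z₀^(t + ((s * p^n : ℕ):ℤ))
        = z₀^t * (((p:ℚ_[p])^N * (c - s)) - ((1+y)^s - 1 - (s:ℚ_[p])*(p:ℚ_[p])^N)) := by
      rw [hzpow]
      have hvc : v = (p:ℚ_[p])^N * c + 1 := by
        rw [hc]; field_simp; ring
      have hzv : z = z₀^t * v := by rw [hv]; field_simp
      rw [hzv, hvc]; push_cast; ring
    have hcs : ‖(p:ℚ_[p])^N * (c - s)‖ ≤ (p:ℝ)^(-(N+1:ℤ)) := by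
      rw [norm_mul, padicAux_norm_ppow]
      calc (p:ℝ)^(-(N:ℤ)) * ‖c - s‖ ≤ (p:ℝ)^(-(N:ℤ)) * (p:ℝ)^(-1:ℤ) :=
            mul_le_mul_of_nonneg_left hs (by positivity)
        _ = (p:ℝ)^(-(N+1:ℤ)) := by rw [← zpow_add₀ padicAux_p_ne]; congr 1 <;> try ring
    have hfin : ‖z - z₀^(t + ((s * p^n : ℕ):ℤ))‖ ≤ (p:ℝ)^(-(N+1:ℤ)) := by
      rw [hsplit, norm_mul, hz₀t, one_mul, sub_eq_add_neg]
      refine (norm_add_le_max _ _).trans (max_le hcs ?_)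
      rw [norm_neg]; exact hbig
    refine hfin.trans_eq ?_
    congr 1 <;> try (rw [hN]; push_cast; ring)

lemma padicAux_L_ne_zero (L : ℚ_[p]ˣ → ℚ_[p])
    (hL_series : ∀ x : ℚ_[p], ‖x‖ ≤ (p : ℝ)⁻¹ → ∀ u : ℚ_[p]ˣ, (u : ℚ_[p]) = 1 + x →
      HasSum (fun n : ℕ => (-1 : ℚ_[p]) ^ (n + 1) * x ^ n / (n : ℚ_[p])) (L u))
    (u₀ : ℚ_[p]ˣ) (hu₀ : (u₀ : ℚ_[p]) = 1 + (p:ℚ_[p])^2) : L u₀ ≠ 0 := by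
  set x : ℚ_[p] := (p:ℚ_[p])^2 with hx
  have hxnorm : ‖x‖ = (p:ℝ)^(-2:ℤ) := by
    rw [hx, padicAux_norm_ppow]; norm_num
  have hxle : ‖x‖ ≤ (p:ℝ)⁻¹ := by
    rw [hxnorm, ← zpow_neg_one]
    exact zpow_le_zpow_right₀ padicAux_one_le_p (by norm_num)
  set t : ℕ → ℚ_[p] := fun n => (-1 : ℚ_[p]) ^ (n + 1) * x ^ n / (n : ℚ_[p]) with ht
  have hsum : HasSum t (L u₀) := hL_series x hxle u₀ hu₀
  have hfirst : ∑ i ∈ range 2, t i = x := by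
    rw [Finset.sum_range_succ, Finset.sum_range_one, ht]
    norm_num
  have htail : HasSum (fun n => t (n+2)) (L u₀ - x) := by
    rw [← hfirst]
    exact (hasSum_nat_add_iff' 2).mpr hsum
  have hterm : ∀ n : ℕ, ‖t (n+2)‖ ≤ (p:ℝ)^(-3:ℤ) := by
    intro n
    have h1 : ‖t (n+2)‖ ≤ (p:ℝ)^(-(2*(n+2):ℤ)) * ((n+2:ℕ):ℝ) := by
      rw [ht]
      simp only [div_eq_mul_inv, norm_mul, norm_pow, norm_neg, norm_one, one_pow, one_mul]
      have e1 : ‖x‖^(n+2) = (p:ℝ)^(-(2*(n+2):ℤ)) := by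
        rw [hxnorm, ← zpow_natCast _ (n+2), ← zpow_mul]
        congr 1 <;> try (push_cast; ring)
      rw [e1]
      refine mul_le_mul_of_nonneg_left ?_ (by positivity)
      exact_mod_cast padicAux_norm_natCast_inv_le (n+2) (by omega)
    refine h1.trans ?_
    have h2 : ((n+2:ℕ):ℝ) ≤ (p:ℝ)^((2*(n+2):ℤ) - 3) := by
      have hn2 : ((n+2:ℕ):ℝ) ≤ (2:ℝ)^(2*n+1) := by
        have hnat : (n+2:ℕ) ≤ 2^(2*n+1) := by
          calc (n+2:ℕ) ≤ 2^(n+1) := by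
                have := Nat.lt_two_pow_self (n := n+1)
                omega
            _ ≤ 2^(2*n+1) := Nat.pow_le_pow_right (by norm_num) (by omega)
        exact_mod_cast hnat
      have hp2 : (2:ℝ)^(2*n+1) ≤ (p:ℝ)^(2*n+1) := by
        apply pow_le_pow_left₀ (by norm_num)
        exact_mod_cast hp.out.two_le
      have hcast : ((2*(n+2):ℤ) - 3) = ((2*n+1 : ℕ) : ℤ) := by push_cast; ring
      rw [hcast, zpow_natCast]
      exact hn2.trans hp2
    calc (p:ℝ)^(-(2*(n+2):ℤ)) * ((n+2:ℕ):ℝ)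
        ≤ (p:ℝ)^(-(2*(n+2):ℤ)) * (p:ℝ)^((2*(n+2):ℤ) - 3) := by
          exact mul_le_mul_of_nonneg_left h2 (by positivity)
      _ = (p:ℝ)^(-3:ℤ) := by rw [← zpow_add₀ padicAux_p_ne]; congr 1 <;> try ring
  have hnorm_tail : ‖L u₀ - x‖ ≤ (p:ℝ)^(-3:ℤ) := by
    rw [← htail.tsum_eq]
    exact norm_tsum_le_of_forall_le_of_nonneg (by positivity) hterm
  intro hL0
  rw [hL0, zero_sub, norm_neg, hxnorm] at hnorm_tail
  have hlt : (p:ℝ)^(-3:ℤ) < (p:ℝ)^(-2:ℤ) := by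
    apply zpow_lt_zpow_right₀ (by exact_mod_cast hp.out.one_lt)
    norm_num
  exact absurd (hnorm_tail.trans_lt hlt) (lt_irrefl _)

lemma padicAux_val_of_norm_one (z : ℚ_[p]) (hz : z ≠ 0) (h : ‖z‖ = 1) : z.valuation = 0 := by
  have h1 := Padic.norm_eq_zpow_neg_valuation hz
  rw [h] at h1
  have h2 : (p:ℝ)^(0:ℤ) = (p:ℝ)^(-z.valuation) := by rw [zpow_zero]; exact h1
  have h3 := (zpow_right_strictMono₀ (show (1:ℝ) < (p:ℝ) by exact_mod_cast hp.out.one_lt)).injective h2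
  omega

lemma padicAux_units_tendsto (v : ℕ → ℚ_[p]ˣ) (u : ℚ_[p]ˣ)
    (h : Tendsto (fun n => ((v n : ℚ_[p]))) atTop (nhds (u:ℚ_[p]))) :
    Tendsto v atTop (nhds u) := by
  rw [Units.isInducing_embedProduct.tendsto_nhds_iff]
  refine Filter.Tendsto.prodMk_nhds h ?_
  simp only [Units.val_inv_eq_inv_val]
  exact (MulOpposite.continuous_op.tendsto _).comp (h.inv₀ (Units.ne_zero u))

-- homomorphism power lemmas
lemma homAux_one {M : Type*} [AddCommGroup M] (g : ℚ_[p]ˣ → M)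
    (hg : ∀ a b, g (a*b) = g a + g b) : g 1 = 0 := by
  have := hg 1 1
  rw [mul_one] at this
  exact (add_eq_left.mp this.symm)

lemma homAux_pow {M : Type*} [AddCommGroup M] (g : ℚ_[p]ˣ → M)
    (hg : ∀ a b, g (a*b) = g a + g b) (u : ℚ_[p]ˣ) (n : ℕ) : g (u^n) = n • g u := by
  induction n with
  | zero => simpa using homAux_one g hg
  | succ n ih => rw [pow_succ, hg, ih, add_nsmul, one_nsmul]

lemma homAux_inv {M : Type*} [AddCommGroup M] (g : ℚ_[p]ˣ → M)
    (hg : ∀ a b, g (a*b) = g a + g b) (u : ℚ_[p]ˣ) : g u⁻¹ = - g u := by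
  have := hg u u⁻¹
  rw [mul_inv_cancel, homAux_one g hg] at this
  exact (eq_neg_of_add_eq_zero_right this.symm)

lemma homAux_zpow {M : Type*} [AddCommGroup M] (g : ℚ_[p]ˣ → M)
    (hg : ∀ a b, g (a*b) = g a + g b) (u : ℚ_[p]ˣ) (t : ℤ) : g (u^t) = t • g u := by
  cases t with
  | ofNat n => rw [Int.ofNat_eq_coe, zpow_natCast, homAux_pow g hg]; simp
  | negSucc n =>
    rw [zpow_negSucc, homAux_inv g hg, homAux_pow g hg]
    simp [negSucc_zsmul]

end PadicAux

/-- **`Hom_cont(ℚ_p^×, E)` is two-dimensional with basis `{log₀, val_p}`.**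
Let `E` be a finite extension of `ℚ_p` (a normed field, normed `ℚ_p`-algebra,
finite-dimensional over `ℚ_p`, so its topology is the one induced by the unique
absolute value extending `|·|_p`).  Let `L = log₀ : ℚ_p^× → ℚ_p` be the Iwasawa
logarithm (characterized by being a continuous group homomorphism with `L p = 0`,
given on `1 + pℤ_p` by the usual power series), and `val_p` the `p`-adic valuation.
Then every continuous group homomorphism `f : ℚ_p^× → (E, +)` can be written uniquely
as `f = a • log₀ + b • val_p` with `a, b ∈ E`; in particular the `E`-vector space of
continuous homomorphisms `ℚ_p^× → (E, +)` is `2`-dimensional with basis `{log₀, val_p}`. -/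
theorem continuous_hom_units_padic_eq_log_val
    (p : ℕ) [Fact p.Prime]
    (E : Type) [NormedField E] [NormedAlgebra ℚ_[p] E] [FiniteDimensional ℚ_[p] E]
    -- `L` is the Iwasawa logarithm `log₀`:
    (L : ℚ_[p]ˣ → ℚ_[p])
    (hL_cont : Continuous L)
    (hL_hom : ∀ a b : ℚ_[p]ˣ, L (a * b) = L a + L b)
    (hL_p : ∀ u : ℚ_[p]ˣ, (u : ℚ_[p]) = (p : ℚ_[p]) → L u = 0)
    (hL_series : ∀ x : ℚ_[p], ‖x‖ ≤ (p : ℝ)⁻¹ → ∀ u : ℚ_[p]ˣ, (u : ℚ_[p]) = 1 + x →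
      HasSum (fun n : ℕ => (-1 : ℚ_[p]) ^ (n + 1) * x ^ n / (n : ℚ_[p])) (L u))
    -- `f` is an arbitrary continuous group homomorphism `ℚ_p^× → (E, +)`:
    (f : ℚ_[p]ˣ → E)
    (hf_cont : Continuous f)
    (hf_hom : ∀ a b : ℚ_[p]ˣ, f (a * b) = f a + f b) :
    ∃! ab : E × E, ∀ u : ℚ_[p]ˣ,
      f u = ab.1 * algebraMap ℚ_[p] E (L u)
        + ab.2 * ((Padic.valuation (u : ℚ_[p]) : ℤ) : E) := by
  have hprime : p.Prime := Fact.out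
  have hpQ : (p:ℚ_[p]) ≠ 0 := by exact_mod_cast hprime.ne_zero
  set π : ℚ_[p]ˣ := Units.mk0 (p:ℚ_[p]) hpQ with hπ
  set u₀ : ℚ_[p]ˣ := Units.mk0 (1 + (p:ℚ_[p])^2) padicAux_z₀_ne with hu₀
  have hu₀val : (u₀:ℚ_[p]) = 1 + (p:ℚ_[p])^2 := rfl
  have hLu₀ : L u₀ ≠ 0 := padicAux_L_ne_zero L hL_series u₀ hu₀val
  have halg_inj : Function.Injective (algebraMap ℚ_[p] E) := (algebraMap ℚ_[p] E).injective
  haveI : CharZero E := charZero_of_injective_algebraMap halg_inj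
  have halg_ne : algebraMap ℚ_[p] E (L u₀) ≠ 0 := fun h =>
    hLu₀ (halg_inj (by rw [h, map_zero]))
  set b : E := f π with hb
  set a : E := f u₀ / algebraMap ℚ_[p] E (L u₀) with ha
  have ha' : a * algebraMap ℚ_[p] E (L u₀) = f u₀ := div_mul_cancel₀ _ halg_ne
  have hLπ : L π = 0 := hL_p π rfl
  have hvalπ : (π:ℚ_[p]).valuation = 1 := Padic.valuation_p
  have halg_cont : Continuous (algebraMap ℚ_[p] E) := continuous_algebraMap _ _
  -- Step C : f = a • L on the open subgroup 1 + p²ℤ_p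
  have keyC : ∀ w : ℚ_[p]ˣ, ‖(w:ℚ_[p]) - 1‖ ≤ (p:ℝ)^(-2:ℤ) →
      f w = a * algebraMap ℚ_[p] E (L w) := by
    intro w hw
    have hT : ∀ n : ℕ, ∃ t : ℤ, ‖(w:ℚ_[p]) - (1 + (p:ℚ_[p])^2)^t‖ ≤ (p:ℝ)^(-(n+2:ℤ)) :=
      fun n => padicAux_density n _ hw
    choose T hTs using hT
    set U : ℕ → ℚ_[p]ˣ := fun n => u₀ ^ (T n) with hU
    have hUval : ∀ n, ((U n : ℚ_[p])) = (1 + (p:ℚ_[p])^2)^(T n) := by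
      intro n
      rw [hU]
      exact Units.val_zpow_eq_zpow_val u₀ (T n)
    have hconv : ∀ n:ℕ, (p:ℝ)^(-((n:ℤ)+2)) = ((p:ℝ)⁻¹)^(n+2) := by
      intro n
      rw [zpow_neg, ← inv_zpow, show ((n:ℤ)+2) = ((n+2:ℕ):ℤ) by push_cast; ring, zpow_natCast]
    have htend0 : Filter.Tendsto (fun n => ((U n):ℚ_[p])) Filter.atTop (nhds (w:ℚ_[p])) := by
      rw [tendsto_iff_dist_tendsto_zero]
      refine squeeze_zero (g := fun n => ((p:ℝ)⁻¹)^(n+2)) (fun n => dist_nonneg) (fun n => ?_) ?_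
      · show dist _ _ ≤ ((p:ℝ)⁻¹)^(n+2)
        rw [dist_eq_norm, hUval, ← norm_neg, neg_sub, ← hconv]
        exact hTs n
      · have h0 : (0:ℝ) ≤ (p:ℝ)⁻¹ := by positivity
        have h1 : (p:ℝ)⁻¹ < 1 := inv_lt_one_of_one_lt₀ (by exact_mod_cast hprime.one_lt)
        have := (tendsto_pow_atTop_nhds_zero_of_lt_one h0 h1).comp
          (Filter.tendsto_add_atTop_nat 2)
        exact this
    have hUtend : Filter.Tendsto U Filter.atTop (nhds w) :=
      padicAux_units_tendsto U w htend0
    have h1 : Filter.Tendsto (fun n => f (U n)) Filter.atTop (nhds (f w)) :=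
      (hf_cont.tendsto w).comp hUtend
    have h2 : Filter.Tendsto (fun n => a * algebraMap ℚ_[p] E (L (U n))) Filter.atTop
        (nhds (a * algebraMap ℚ_[p] E (L w))) :=
      tendsto_const_nhds.mul ((halg_cont.tendsto _).comp ((hL_cont.tendsto w).comp hUtend))
    have heq : ∀ n, f (U n) = a * algebraMap ℚ_[p] E (L (U n)) := by
      intro n
      rw [hU]
      rw [homAux_zpow f hf_hom, homAux_zpow L hL_hom, map_zsmul, mul_smul_comm, ha']
    exact tendsto_nhds_unique h1 (h2.congr (fun n => (heq n).symm))
  -- Step B : f = a • L on norm-one units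
  have keyW : ∀ w : ℚ_[p]ˣ, ‖(w:ℚ_[p])‖ = 1 → f w = a * algebraMap ℚ_[p] E (L w) := by
    intro w hw
    set m : ℕ := (p-1)*p with hm
    have hmne : m ≠ 0 := by
      have := hprime.two_le
      rw [hm]
      have h2 := hprime.two_le
      exact Nat.mul_ne_zero (by omega) (by omega)
    have hfermat := padicAux_fermat (p := p) (w:ℚ_[p]) hw
    set y : ℚ_[p] := (w:ℚ_[p])^(p-1) - 1 with hy
    have hy1 : ‖y‖ ≤ 1 := hfermat.trans (padicAux_zpow_le_one (by norm_num))
    have hS := padicAux_pow_sub_linear y hy1 p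
    have hwm : ((w^m : ℚ_[p]ˣ):ℚ_[p]) = (1+y)^p := by
      rw [Units.val_pow_eq_pow_val, hy, hm, pow_mul]
      ring_nf
    have hwm1 : ‖((w^m : ℚ_[p]ˣ):ℚ_[p]) - 1‖ ≤ (p:ℝ)^(-2:ℤ) := by
      rw [hwm]
      have hre : (1+y)^p - 1 = ((1+y)^p - 1 - (p:ℚ_[p])*y) + (p:ℚ_[p])*y := by ring
      rw [hre]
      refine (norm_add_le_max _ _).trans (max_le ?_ ?_)
      · refine hS.trans ?_
        calc ‖y‖^2 ≤ ((p:ℝ)^(-1:ℤ))^2 := pow_le_pow_left₀ (norm_nonneg _) hfermat 2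
          _ = (p:ℝ)^(-2:ℤ) := by rw [← zpow_natCast _ 2, ← zpow_mul]; norm_num
      · rw [norm_mul, Padic.norm_p]
        calc (p:ℝ)⁻¹ * ‖y‖ ≤ (p:ℝ)⁻¹ * (p:ℝ)^(-1:ℤ) :=
              mul_le_mul_of_nonneg_left hfermat (by positivity)
          _ = (p:ℝ)^(-2:ℤ) := by
              rw [← zpow_neg_one, ← zpow_add₀ padicAux_p_ne]; norm_num
    have hfwm := keyC (w^m) hwm1
    rw [homAux_pow f hf_hom, homAux_pow L hL_hom, map_nsmul, mul_smul_comm] at hfwm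
    have hmE : ((m:ℕ):E) ≠ 0 := Nat.cast_ne_zero.mpr hmne
    rw [nsmul_eq_mul, nsmul_eq_mul] at hfwm
    exact mul_left_cancel₀ hmE hfwm
  -- full formula
  have key2 : ∀ u : ℚ_[p]ˣ,
      f u = a * algebraMap ℚ_[p] E (L u) + b * (((u:ℚ_[p]).valuation : ℤ) : E) := by
    intro u
    set v : ℤ := (u:ℚ_[p]).valuation with hv
    set w : ℚ_[p]ˣ := u * π^(-v) with hw
    have hwval : (w:ℚ_[p]) = (u:ℚ_[p]) * (p:ℚ_[p])^(-v) := by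
      rw [hw, Units.val_mul, Units.val_zpow_eq_zpow_val]
      rfl
    have hwnorm : ‖(w:ℚ_[p])‖ = 1 := by
      rw [hwval, norm_mul, norm_zpow, Padic.norm_p, Padic.norm_eq_zpow_neg_valuation u.ne_zero,
        inv_zpow, ← zpow_neg, neg_neg, ← hv]
      rw [← zpow_add₀ (padicAux_p_ne (p := p)), neg_add_cancel, zpow_zero]
    have hu_eq : u = w * π^v := by
      rw [hw, mul_assoc, zpow_neg, inv_mul_cancel, mul_one]
    have hfu : f u = f w + v • f π := by
      conv_lhs => rw [hu_eq]
      rw [hf_hom, homAux_zpow f hf_hom]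
    have hLu : L u = L w := by
      conv_lhs => rw [hu_eq]
      rw [hL_hom, homAux_zpow L hL_hom, hLπ, smul_zero, add_zero]
    rw [hfu, keyW w hwnorm, ← hLu]
    congr 1
    rw [zsmul_eq_mul, mul_comm, hb]
  refine ⟨(a, b), key2, ?_⟩
  rintro ⟨a', b'⟩ hab'
  have h1 := hab' π
  rw [hLπ, map_zero, mul_zero, zero_add, hvalπ] at h1
  norm_num at h1
  have hbb : b' = b := by rw [hb, h1]
  have h3 := hab' u₀
  have hval0 : (u₀:ℚ_[p]).valuation = 0 :=
    padicAux_val_of_norm_one _ u₀.ne_zero (by rw [hu₀val]; exact padicAux_norm_z₀)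
  rw [hval0] at h3
  norm_num at h3
  have haa : a' = a := mul_right_cancel₀ halg_ne (h3.symm.trans ha'.symm)
  exact Prod.ext haa hbb
end

section
/- Let p be a prime and E a finite field extension of ℚ_p, with the topology induced by the unique absolute value on E extending |·|_p. For ℒ ∈ E set log_ℒ = log_0 − ℒ·val_p : ℚ_p^× → E, and let ρ_ℒ : ℚ_p^× → GL_2(E) be the continuous group homomorphism sending a to the upper unipotent matrix with rows (1, log_ℒ(a)) and (0, 1). Then for ℒ, ℒ' ∈ E, the homomorphisms ρ_ℒ and ρ_{ℒ'} are conjugate in GL_2(E) (i.e., there exists g ∈ GL_2(E) with g·ρ_ℒ(a)·g^{-1} = ρ_{ℒ'}(a) for all a ∈ ℚ_p^×) if and only if ℒ = ℒ'. -/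
lemma aux_nat_le_pow (p : ℕ) [hp : Fact p.Prime] (n : ℕ) : n + 2 ≤ p ^ (2 * n + 1) := by
  calc n + 2 ≤ 2 ^ (n + 1) := by have := Nat.lt_two_pow_self (n := n + 1); omega
    _ ≤ 2 ^ (2 * n + 1) := Nat.pow_le_pow_right (by norm_num) (by omega)
    _ ≤ p ^ (2 * n + 1) := Nat.pow_le_pow_left hp.out.two_le _

/-- If `s` is the sum of the logarithm series evaluated at `x = p ^ 2`, then `s ≠ 0`,
since the first term `p ^ 2` strictly dominates all the others in norm. -/
lemma aux_sum_ne_zero (p : ℕ) [hp : Fact p.Prime] {s : ℚ_[p]}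
    (hs : HasSum (fun n : ℕ => (-1 : ℚ_[p]) ^ (n + 1) * ((p : ℚ_[p]) ^ 2) ^ n / (n : ℚ_[p])) s) :
    s ≠ 0 := by
  have hp1 : (1 : ℝ) < (p : ℝ) := by exact_mod_cast hp.out.one_lt
  set x : ℚ_[p] := (p : ℚ_[p]) ^ 2 with hxdef
  set f : ℕ → ℚ_[p] := fun n => (-1 : ℚ_[p]) ^ (n + 1) * x ^ n / (n : ℚ_[p]) with hfdef
  have hf0 : f 0 = 0 := by simp [hfdef]
  have hf1 : f 1 = x := by simp [hfdef]
  have hxnorm : ‖x‖ = (p : ℝ) ^ (-2 : ℤ) := by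
    rw [hxdef]; exact_mod_cast Padic.norm_p_pow (p := p) 2
  have htail : HasSum (fun n => f (n + 2)) (s - ∑ i ∈ Finset.range 2, f i) :=
    ((hasSum_nat_add_iff' 2).mpr hs)
  have hsum2 : ∑ i ∈ Finset.range 2, f i = x := by
    rw [Finset.sum_range_succ, Finset.sum_range_one, hf0, hf1, zero_add]
  have hbound : ∀ n : ℕ, ‖f (n + 2)‖ ≤ (p : ℝ) ^ (-3 : ℤ) := by
    intro n
    set m : ℕ := n + 2 with hm
    have hm0 : m ≠ 0 := by omega
    have hnormm : ‖((m : ℚ_[p]))‖ = (p : ℝ) ^ (-(padicValNat p m : ℤ)) := by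
      rw [Padic.norm_eq_zpow_neg_valuation (by exact_mod_cast hm0), Padic.valuation_natCast]
    have hfm : ‖f m‖ = (p : ℝ) ^ ((padicValNat p m : ℤ) - 2 * m) := by
      rw [hfdef]
      simp only [norm_div, norm_mul, norm_pow, norm_neg, norm_one, one_pow, one_mul,
        hxnorm, hnormm, ← zpow_natCast ((p : ℝ) ^ (-2 : ℤ)), ← zpow_mul]
      rw [← zpow_sub₀ (by positivity)]
      ring_nf
    rw [hfm]
    apply zpow_le_zpow_right₀ (le_of_lt hp1)
    have hdvd : p ^ padicValNat p m ≤ m := Nat.le_of_dvd (by omega) pow_padicValNat_dvd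
    have hmle : m ≤ p ^ (2 * n + 1) := aux_nat_le_pow p n
    have : padicValNat p m ≤ 2 * n + 1 :=
      (Nat.pow_le_pow_iff_right hp.out.one_lt).mp (le_trans hdvd hmle)
    omega
  have hnorm_tail : ‖s - x‖ ≤ (p : ℝ) ^ (-3 : ℤ) := by
    rw [hsum2] at htail
    rw [← htail.tsum_eq]
    exact IsUltrametricDist.norm_tsum_le_of_forall_le_of_nonneg (by positivity) hbound
  intro hs0
  rw [hs0, zero_sub, norm_neg, hxnorm] at hnorm_tail
  have : (p : ℝ) ^ (-3 : ℤ) < (p : ℝ) ^ (-2 : ℤ) := by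
    apply zpow_lt_zpow_right₀ hp1; omega
  linarith

/-- **Distinct `ℒ`-invariants give non-isomorphic two-dimensional representations.**
Let `E` be a finite extension of `ℚ_p` (a normed field, normed `ℚ_p`-algebra,
finite-dimensional over `ℚ_p`).  For `ℒ ∈ E` set `log_ℒ = log₀ - ℒ • val_p : ℚ_p^× → E`
(`L = log₀` being the Iwasawa logarithm, characterized by the hypotheses below), and let
`ρ_ℒ : ℚ_p^× → GL₂(E)` send `a` to the upper unipotent matrix `!![1, log_ℒ a; 0, 1]`.
Then for `ℒ, ℒ' ∈ E`, the homomorphisms `ρ_ℒ` and `ρ_ℒ'` are conjugate in `GL₂(E)`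
(i.e. there exists `g ∈ GL₂(E)` with `g · ρ_ℒ(a) · g⁻¹ = ρ_ℒ'(a)` for all `a ∈ ℚ_p^×`)
if and only if `ℒ = ℒ'`. -/
theorem unipotent_reps_conjugate_iff_L_invariants_eq
    (p : ℕ) [Fact p.Prime]
    (E : Type) [NormedField E] [NormedAlgebra ℚ_[p] E] [FiniteDimensional ℚ_[p] E]
    -- `L` is the Iwasawa logarithm `log₀`:
    (L : ℚ_[p]ˣ → ℚ_[p])
    (hL_cont : Continuous L)
    (hL_hom : ∀ a b : ℚ_[p]ˣ, L (a * b) = L a + L b)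
    (hL_p : ∀ u : ℚ_[p]ˣ, (u : ℚ_[p]) = (p : ℚ_[p]) → L u = 0)
    (hL_series : ∀ x : ℚ_[p], ‖x‖ ≤ (p : ℝ)⁻¹ → ∀ u : ℚ_[p]ˣ, (u : ℚ_[p]) = 1 + x →
      HasSum (fun n : ℕ => (-1 : ℚ_[p]) ^ (n + 1) * x ^ n / (n : ℚ_[p])) (L u))
    -- the functions `log_ℒ = log₀ - ℒ • val_p` and the representations `ρ_ℒ`:
    (logL : E → ℚ_[p]ˣ → E)
    (hlogL : ∀ ℒ : E, ∀ a : ℚ_[p]ˣ,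
      logL ℒ a = algebraMap ℚ_[p] E (L a) - ℒ * ((Padic.valuation (a : ℚ_[p]) : ℤ) : E))
    (ρ : E → ℚ_[p]ˣ → Matrix (Fin 2) (Fin 2) E)
    (hρ : ∀ ℒ : E, ∀ a : ℚ_[p]ˣ, ρ ℒ a = !![1, logL ℒ a; 0, 1])
    (ℒ ℒ' : E) :
    (∃ g : (Matrix (Fin 2) (Fin 2) E)ˣ, ∀ a : ℚ_[p]ˣ,
        (g : Matrix (Fin 2) (Fin 2) E) * ρ ℒ a *
          ((g⁻¹ : (Matrix (Fin 2) (Fin 2) E)ˣ) : Matrix (Fin 2) (Fin 2) E) = ρ ℒ' a)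
      ↔ ℒ = ℒ' := by
  have hp := (Fact.out : p.Prime)
  have hp2 := hp.two_le
  have hp1R : (1 : ℝ) < (p : ℝ) := by exact_mod_cast hp.one_lt
  constructor
  · rintro ⟨g, hg⟩
    -- rewrite the conjugation relation as a commutation relation
    have key : ∀ a : ℚ_[p]ˣ,
        (g : Matrix (Fin 2) (Fin 2) E) * ρ ℒ a = ρ ℒ' a * (g : Matrix (Fin 2) (Fin 2) E) := by
      intro a
      rw [← hg a, mul_assoc, Units.inv_mul, mul_one]
    -- the unit `u = 1 + p ^ 2`
    have hq0 : ((1 : ℚ_[p]) + (p : ℚ_[p]) ^ 2) ≠ 0 := by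
      have : ((1 + p ^ 2 : ℕ) : ℚ_[p]) ≠ 0 := Nat.cast_ne_zero.mpr (by positivity)
      push_cast at this
      simpa [add_comm] using this
    set u : ℚ_[p]ˣ := Units.mk0 _ hq0 with hudef
    have hucoe : (u : ℚ_[p]) = 1 + (p : ℚ_[p]) ^ 2 := rfl
    -- the unit `up = p`
    have hp0 : ((p : ℚ_[p])) ≠ 0 := by exact_mod_cast hp.ne_zero
    set up : ℚ_[p]ˣ := Units.mk0 _ hp0 with hupdef
    have hupcoe : (up : ℚ_[p]) = (p : ℚ_[p]) := rfl
    -- valuation of `u` is zero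
    have hval : ((u : ℚ_[p])).valuation = 0 := by
      rw [hucoe]
      have h1 : ((1 : ℚ_[p]) + (p : ℚ_[p]) ^ 2) = ((1 + p ^ 2 : ℕ) : ℚ_[p]) := by
        push_cast; ring
      rw [h1, Padic.valuation_natCast, padicValNat.eq_zero_of_not_dvd, Nat.cast_zero]
      intro hdvd
      have hpp2 : p ∣ p ^ 2 := dvd_pow_self p two_ne_zero
      have : p ∣ 1 := (Nat.dvd_add_right hpp2).mp (by rwa [Nat.add_comm] at hdvd)
      have := Nat.le_of_dvd one_pos this; omega
    -- `L u ≠ 0`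
    have hnormp2 : ‖(p : ℚ_[p]) ^ 2‖ ≤ (p : ℝ)⁻¹ := by
      have h2 : ‖(p : ℚ_[p]) ^ 2‖ = (p : ℝ) ^ (-2 : ℤ) := by
        exact_mod_cast Padic.norm_p_pow (p := p) 2
      rw [h2, ← zpow_neg_one]
      exact zpow_le_zpow_right₀ (le_of_lt hp1R) (by omega)
    have hLu : L u ≠ 0 :=
      aux_sum_ne_zero p (hL_series ((p : ℚ_[p]) ^ 2) hnormp2 u hucoe)
    set c : E := algebraMap ℚ_[p] E (L u) with hcdef
    have hc : c ≠ 0 := by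
      intro h
      exact hLu ((algebraMap ℚ_[p] E).injective (by rw [map_zero]; exact h))
    -- values of `logL` at `u` and `up`
    have hlogu : ∀ M : E, logL M u = c := by
      intro M; rw [hlogL, hval]; simp [hcdef]
    have hlogp : ∀ M : E, logL M up = -M := by
      intro M
      rw [hlogL, hupcoe, Padic.valuation_p, hL_p up hupcoe]
      simp
    -- commutation at `u` forces `g 1 0 = 0` and `g 0 0 = g 1 1`
    have hku := key u
    rw [hρ, hρ, hlogu ℒ, hlogu ℒ'] at hku
    have h11 := Matrix.ext_iff.2 hku 1 1
    have h01 := Matrix.ext_iff.2 hku 0 1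
    simp [Matrix.mul_apply, Fin.sum_univ_two] at h11 h01
    have hg10 : (g : Matrix (Fin 2) (Fin 2) E) 1 0 = 0 := by
      rcases h11 with h | h
      · exact h
      · exact absurd h hc
    have hg0011 : (g : Matrix (Fin 2) (Fin 2) E) 0 0 = (g : Matrix (Fin 2) (Fin 2) E) 1 1 := by
      have : (g : Matrix (Fin 2) (Fin 2) E) 0 0 * c
          = (g : Matrix (Fin 2) (Fin 2) E) 1 1 * c := by
        rw [mul_comm ((g : Matrix (Fin 2) (Fin 2) E) 1 1) c]
        linear_combination h01
      exact mul_right_cancel₀ hc this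
    -- `g 0 0 ≠ 0` since `g` is invertible
    have hdet : IsUnit ((g : Matrix (Fin 2) (Fin 2) E).det) :=
      (Matrix.isUnit_iff_isUnit_det _).mp g.isUnit
    have hdet2 : (g : Matrix (Fin 2) (Fin 2) E).det
        = (g : Matrix (Fin 2) (Fin 2) E) 0 0 * (g : Matrix (Fin 2) (Fin 2) E) 0 0 := by
      rw [Matrix.det_fin_two, hg10, hg0011]; ring
    have hg00 : (g : Matrix (Fin 2) (Fin 2) E) 0 0 ≠ 0 := by
      intro h
      rw [hdet2, h, mul_zero] at hdet
      exact hdet.ne_zero rfl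
    -- commutation at `up` gives the conclusion
    have hkp := key up
    rw [hρ, hρ, hlogp ℒ, hlogp ℒ'] at hkp
    have h01p := Matrix.ext_iff.2 hkp 0 1
    simp [Matrix.mul_apply, Fin.sum_univ_two] at h01p
    have : (g : Matrix (Fin 2) (Fin 2) E) 0 0 * ℒ
        = (g : Matrix (Fin 2) (Fin 2) E) 0 0 * ℒ' := by
      rw [mul_comm ((g : Matrix (Fin 2) (Fin 2) E) 0 0) ℒ']
      linear_combination -h01p - ℒ' * hg0011
    exact mul_left_cancel₀ hg00 this
  · rintro rfl
    exact ⟨1, fun a => by simp⟩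
end
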